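/- Let β>0, μ>1 and f, g ∈ E_{(β,μ)}. Then the convolution (f⋆g)(m) = (2π)^{−1/2} ∫_{−∞}^{∞} f(m−m₁)g(m₁) dm₁ is well-defined, belongs to E_{(β,μ)}, and there is a constant C = C(μ) > 0 (independent of f,g) with ‖f⋆g‖_{(β,μ)} ≤ C·‖f‖_{(β,μ)}·‖g‖_{(β,μ)}. -/

import Mathlib

/-- The weighted quantity `(1+|m|)^μ e^{β|m|} |f(m)|`. -/
noncomputable def Eweight (β μ : ℝ) (f : ℝ → ℂ) (m : ℝ) : ℝ :=
  (1 + |m|) ^ μ * Real.exp (β * |m|) * ‖f m‖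

/-- Membership in the space `E_{(β,μ)}`: continuous with finite weighted sup. -/
def MemE (β μ : ℝ) (f : ℝ → ℂ) : Prop :=
  Continuous f ∧ BddAbove (Set.range (Eweight β μ f))

/-- The norm `‖f‖_{(β,μ)} = sup_m (1+|m|)^μ e^{β|m|} |f(m)|`. -/
noncomputable def Enorm (β μ : ℝ) (f : ℝ → ℂ) : ℝ :=
  ⨆ m : ℝ, Eweight β μ f m

/-- The convolution `(f⋆g)(m) = (2π)^{−1/2} ∫ f(m−m₁) g(m₁) dm₁`. -/
noncomputable def Econv (f g : ℝ → ℂ) (m : ℝ) : ℂ :=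
  ((2 * Real.pi) ^ (-(1 : ℝ) / 2) : ℝ) * ∫ m₁ : ℝ, f (m - m₁) * g m₁

/-!
Write `⟨x⟩^{-μ} = (1 + |x|)^{-μ}`. An element of `E_{(β,μ)}` satisfies
`|f(x)| ≤ ‖f‖ ⟨x⟩^{-μ} e^{-β|x|}`. In the convolution integrand the exponential factors combine
to at most `e^{-β|m|}` by the triangle inequality, so everything reduces to the polynomial
estimate `∫ ⟨m - t⟩^{-μ} ⟨t⟩^{-μ} dt ≤ C' ⟨m⟩^{-μ}`. It holds because one of `|m - t|`, `|t|`
is at least `|m| / 2`, and the corresponding factor is then at most `2^μ ⟨m⟩^{-μ}`, while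
the other factor is integrable since `μ > 1`.
-/

open MeasureTheory Real Set

noncomputable def polyDecay (μ x : ℝ) : ℝ := (1 + |x|) ^ (-μ)

lemma polyDecay_pos (μ x : ℝ) : 0 < polyDecay μ x := by
  unfold polyDecay; positivity

@[fun_prop]
lemma continuous_polyDecay (μ : ℝ) : Continuous (polyDecay μ) :=
  (continuous_const.add continuous_abs).rpow_const fun x =>
    Or.inl (by positivity : (0 : ℝ) < 1 + |x|).ne'

lemma polyDecay_le_one {μ : ℝ} (hμ : 0 ≤ μ) (x : ℝ) : polyDecay μ x ≤ 1 :=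
  rpow_le_one_of_one_le_of_nonpos (by simp) (by linarith)

lemma rpow_mul_polyDecay (μ x : ℝ) : (1 + |x|) ^ μ * polyDecay μ x = 1 := by
  rw [polyDecay, ← rpow_add (by positivity), add_neg_cancel, rpow_zero]

lemma integrable_polyDecay {μ : ℝ} (hμ : 1 < μ) : Integrable (polyDecay μ) := by
  show Integrable fun x : ℝ => (1 + |x|) ^ (-μ)
  simpa [Real.norm_eq_abs] using
    integrable_one_add_norm (E := ℝ) (μ := volume) (r := μ) (by simpa using hμ)

lemma integral_polyDecay_pos {μ : ℝ} (hμ : 1 < μ) : 0 < ∫ x, polyDecay μ x := by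
  rw [integral_pos_iff_support_of_nonneg (fun x => (polyDecay_pos μ x).le)
    (integrable_polyDecay hμ), Function.support_eq_univ fun x => (polyDecay_pos μ x).ne']
  simp

lemma polyDecay_le_of_half_le {μ m s : ℝ} (hμ : 0 ≤ μ) (hs : |m| / 2 ≤ |s|) :
    polyDecay μ s ≤ 2 ^ μ * polyDecay μ m := by
  calc polyDecay μ s ≤ ((1 + |m|) / 2) ^ (-μ) :=
        rpow_le_rpow_of_nonpos (by positivity) (by linarith [abs_nonneg m]) (by linarith)
    _ = 2 ^ μ * polyDecay μ m := by
        rw [div_rpow (by positivity) zero_le_two, rpow_neg zero_le_two, div_inv_eq_mul,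
          mul_comm, polyDecay]

lemma polyDecay_sub_mul_le {μ : ℝ} (hμ : 0 ≤ μ) (m t : ℝ) :
    polyDecay μ (m - t) * polyDecay μ t ≤
      2 ^ μ * polyDecay μ m * (polyDecay μ (m - t) + polyDecay μ t) := by
  have hsub := (polyDecay_pos μ (m - t)).le
  have ht := (polyDecay_pos μ t).le
  have hc : 0 ≤ 2 ^ μ * polyDecay μ m := by have := polyDecay_pos μ m; positivity
  -- `|m| ≤ |m - t| + |t|`, so one of the two arguments has size at least `|m| / 2`
  rcases le_total (|m| / 2) |t| with hlarge | hsmall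
  · have := mul_le_mul_of_nonneg_left (polyDecay_le_of_half_le hμ hlarge) hsub
    nlinarith [mul_nonneg hc ht]
  · have hlarge : |m| / 2 ≤ |m - t| := by linarith [abs_sub_abs_le_abs_sub m t]
    have := mul_le_mul_of_nonneg_right (polyDecay_le_of_half_le hμ hlarge) ht
    nlinarith [mul_nonneg hc hsub]

lemma integrable_polyDecay_sub_mul {μ : ℝ} (hμ : 1 < μ) (m : ℝ) :
    Integrable fun t => polyDecay μ (m - t) * polyDecay μ t := by
  refine (integrable_polyDecay hμ).mono' (by fun_prop) (Filter.Eventually.of_forall fun t => ?_)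
  rw [norm_of_nonneg (mul_pos (polyDecay_pos μ _) (polyDecay_pos μ t)).le]
  exact mul_le_of_le_one_left (polyDecay_pos μ t).le (polyDecay_le_one (by linarith) _)

lemma integral_polyDecay_sub_mul_le {μ : ℝ} (hμ : 1 < μ) (m : ℝ) :
    ∫ t, polyDecay μ (m - t) * polyDecay μ t ≤
      2 ^ μ * (2 * ∫ t, polyDecay μ t) * polyDecay μ m := by
  have hint := integrable_polyDecay hμ
  have hint_sub : Integrable fun t => polyDecay μ (m - t) := hint.comp_sub_left m
  calc ∫ t, polyDecay μ (m - t) * polyDecay μ t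
      ≤ ∫ t, 2 ^ μ * polyDecay μ m * (polyDecay μ (m - t) + polyDecay μ t) :=
        integral_mono (integrable_polyDecay_sub_mul hμ m) ((hint_sub.add hint).const_mul _)
          (polyDecay_sub_mul_le (by linarith) m)
    _ = 2 ^ μ * (2 * ∫ t, polyDecay μ t) * polyDecay μ m := by
        rw [integral_const_mul, integral_add hint_sub hint, integral_sub_left_eq_self]
        ring

section MemE

variable {β μ : ℝ} {f g : ℝ → ℂ}

lemma Eweight_nonneg (β μ : ℝ) (f : ℝ → ℂ) (m : ℝ) : 0 ≤ Eweight β μ f m := by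
  unfold Eweight; positivity

lemma MemE.Eweight_le_Enorm (hf : MemE β μ f) (x : ℝ) : Eweight β μ f x ≤ Enorm β μ f :=
  le_ciSup hf.2 x

lemma MemE.Enorm_nonneg (hf : MemE β μ f) : 0 ≤ Enorm β μ f :=
  (Eweight_nonneg β μ f 0).trans (hf.Eweight_le_Enorm 0)

lemma MemE.norm_le (hf : MemE β μ f) (x : ℝ) :
    ‖f x‖ ≤ Enorm β μ f * polyDecay μ x * exp (-(β * |x|)) := by
  have h := hf.Eweight_le_Enorm x
  rw [Eweight, mul_comm, ← le_div_iff₀ (by positivity)] at h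
  rwa [polyDecay, rpow_neg (by positivity), exp_neg, mul_assoc, ← mul_inv, ← div_eq_mul_inv]

lemma MemE.norm_le_Enorm (hβ : 0 ≤ β) (hμ : 0 ≤ μ) (hf : MemE β μ f) (x : ℝ) :
    ‖f x‖ ≤ Enorm β μ f := by
  have hexp : exp (-(β * |x|)) ≤ 1 := exp_le_one_iff.2 (by nlinarith [abs_nonneg x])
  calc ‖f x‖ ≤ Enorm β μ f * (polyDecay μ x * exp (-(β * |x|))) :=
        (hf.norm_le x).trans_eq (mul_assoc _ _ _)
    _ ≤ Enorm β μ f :=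
        mul_le_of_le_one_right hf.Enorm_nonneg
          (mul_le_one₀ (polyDecay_le_one hμ x) (exp_pos _).le hexp)

lemma MemE.integrable (hβ : 0 ≤ β) (hμ : 1 < μ) (hf : MemE β μ f) : Integrable f := by
  refine ((integrable_polyDecay hμ).const_mul (Enorm β μ f)).mono'
    hf.1.aestronglyMeasurable (Filter.Eventually.of_forall fun x => ?_)
  have hexp : exp (-(β * |x|)) ≤ 1 := exp_le_one_iff.2 (by nlinarith [abs_nonneg x])
  exact (hf.norm_le x).trans (mul_le_of_le_one_right
    (mul_nonneg hf.Enorm_nonneg (polyDecay_pos μ x).le) hexp)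

lemma memE_and_Enorm_le {B : ℝ} (hf : Continuous f) (hB : ∀ m, Eweight β μ f m ≤ B) :
    MemE β μ f ∧ Enorm β μ f ≤ B :=
  ⟨⟨hf, ⟨B, forall_mem_range.2 hB⟩⟩, ciSup_le hB⟩

end MemE

section Econv

variable {β μ : ℝ} {f g : ℝ → ℂ}

lemma Econv_eq_convolution (f g : ℝ → ℂ) :
    Econv f g = fun m => (((2 * π) ^ (-(1 : ℝ) / 2) : ℝ) : ℂ) *
      convolution f g (ContinuousLinearMap.mul ℂ ℂ) volume m := by
  ext m
  rw [Econv, convolution_mul_swap]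

lemma continuous_Econv (hβ : 0 ≤ β) (hμ : 1 < μ) (hf : MemE β μ f) (hg : MemE β μ g) :
    Continuous (Econv f g) := by
  rw [Econv_eq_convolution]
  refine continuous_const.mul (BddAbove.continuous_convolution_left_of_integrable _ ?_ hf.1
    (hg.integrable hβ hμ))
  exact ⟨Enorm β μ f, forall_mem_range.2 (hf.norm_le_Enorm hβ (by linarith))⟩

lemma norm_mul_le_of_memE (hβ : 0 ≤ β) (hf : MemE β μ f) (hg : MemE β μ g) (m t : ℝ) :
    ‖f (m - t) * g t‖ ≤
      Enorm β μ f * Enorm β μ g * exp (-(β * |m|)) * (polyDecay μ (m - t) * polyDecay μ t) := by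
  have hexp : exp (-(β * |m - t|)) * exp (-(β * |t|)) ≤ exp (-(β * |m|)) := by
    rw [← exp_add, exp_le_exp]
    nlinarith [abs_sub_abs_le_abs_sub m t]
  calc ‖f (m - t) * g t‖
      ≤ (Enorm β μ f * polyDecay μ (m - t) * exp (-(β * |m - t|))) *
          (Enorm β μ g * polyDecay μ t * exp (-(β * |t|))) := by
        rw [norm_mul]
        exact mul_le_mul (hf.norm_le _) (hg.norm_le t) (norm_nonneg _)
          (mul_nonneg (mul_nonneg hf.Enorm_nonneg (polyDecay_pos μ _).le) (exp_pos _).le)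
    _ = Enorm β μ f * Enorm β μ g * (exp (-(β * |m - t|)) * exp (-(β * |t|))) *
          (polyDecay μ (m - t) * polyDecay μ t) := by ring
    _ ≤ _ := by
        gcongr
        · exact mul_nonneg (polyDecay_pos μ _).le (polyDecay_pos μ t).le
        · exact mul_nonneg hf.Enorm_nonneg hg.Enorm_nonneg

lemma integrable_mul_of_memE (hβ : 0 ≤ β) (hμ : 1 < μ) (hf : MemE β μ f) (hg : MemE β μ g)
    (m : ℝ) : Integrable fun t => f (m - t) * g t :=
  ((integrable_polyDecay_sub_mul hμ m).const_mul _).mono'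
    ((hf.1.comp (continuous_const.sub continuous_id)).mul hg.1).aestronglyMeasurable
    (Filter.Eventually.of_forall (norm_mul_le_of_memE hβ hf hg m))

lemma norm_integral_mul_le_of_memE (hβ : 0 ≤ β) (hμ : 1 < μ) (hf : MemE β μ f)
    (hg : MemE β μ g) (m : ℝ) :
    ‖∫ t, f (m - t) * g t‖ ≤
      Enorm β μ f * Enorm β μ g * exp (-(β * |m|)) *
        (2 ^ μ * (2 * ∫ t, polyDecay μ t) * polyDecay μ m) := by
  have hK : 0 ≤ Enorm β μ f * Enorm β μ g * exp (-(β * |m|)) :=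
    mul_nonneg (mul_nonneg hf.Enorm_nonneg hg.Enorm_nonneg) (exp_pos _).le
  calc ‖∫ t, f (m - t) * g t‖
      ≤ ∫ t, Enorm β μ f * Enorm β μ g * exp (-(β * |m|)) *
          (polyDecay μ (m - t) * polyDecay μ t) :=
        norm_integral_le_of_norm_le ((integrable_polyDecay_sub_mul hμ m).const_mul _)
          (Filter.Eventually.of_forall (norm_mul_le_of_memE hβ hf hg m))
    _ = Enorm β μ f * Enorm β μ g * exp (-(β * |m|)) *
          ∫ t, polyDecay μ (m - t) * polyDecay μ t := integral_const_mul _ _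
    _ ≤ _ := mul_le_mul_of_nonneg_left (integral_polyDecay_sub_mul_le hμ m) hK

lemma Eweight_Econv_le (hβ : 0 ≤ β) (hμ : 1 < μ) (hf : MemE β μ f) (hg : MemE β μ g)
    (m : ℝ) :
    Eweight β μ (Econv f g) m ≤
      (2 * π) ^ (-(1 : ℝ) / 2) * (2 ^ μ * (2 * ∫ t, polyDecay μ t)) *
        Enorm β μ f * Enorm β μ g := by
  set c : ℝ := (2 * π) ^ (-(1 : ℝ) / 2)
  have hexp : exp (β * |m|) * exp (-(β * |m|)) = 1 := by rw [← exp_add, add_neg_cancel, exp_zero]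
  calc Eweight β μ (Econv f g) m
      = (1 + |m|) ^ μ * exp (β * |m|) * (c * ‖∫ t, f (m - t) * g t‖) := by
        rw [Eweight, Econv, norm_mul, Complex.norm_of_nonneg (by positivity)]
    _ ≤ (1 + |m|) ^ μ * exp (β * |m|) * (c * (Enorm β μ f * Enorm β μ g * exp (-(β * |m|)) *
          (2 ^ μ * (2 * ∫ t, polyDecay μ t) * polyDecay μ m))) := by
        gcongr
        exact norm_integral_mul_le_of_memE hβ hμ hf hg m
    _ = c * (2 ^ μ * (2 * ∫ t, polyDecay μ t)) * Enorm β μ f * Enorm β μ g *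
          (((1 + |m|) ^ μ * polyDecay μ m) * (exp (β * |m|) * exp (-(β * |m|)))) := by ring
    _ = _ := by rw [rpow_mul_polyDecay, hexp, mul_one, mul_one]

end Econv

/-- for `f, g ∈ E_{(β,μ)}` (β>0, μ>1) the convolution is well defined,
belongs to `E_{(β,μ)}`, and `‖f⋆g‖ ≤ C ‖f‖ ‖g‖` for a constant `C = C(μ)` independent
of `f` and `g`. -/
theorem Econv_bound (β μ : ℝ) (hβ : 0 < β) (hμ : 1 < μ) :
    ∃ C : ℝ, 0 < C ∧ ∀ f g : ℝ → ℂ, MemE β μ f → MemE β μ g →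
      (∀ m : ℝ, MeasureTheory.Integrable (fun m₁ : ℝ => f (m - m₁) * g m₁)) ∧
      MemE β μ (Econv f g) ∧
      Enorm β μ (Econv f g) ≤ C * Enorm β μ f * Enorm β μ g := by
  have hC : 0 < (2 * π) ^ (-(1 : ℝ) / 2) * (2 ^ μ * (2 * ∫ t, polyDecay μ t)) := by
    have := integral_polyDecay_pos hμ
    positivity
  refine ⟨_, hC, fun f g hf hg => ⟨integrable_mul_of_memE hβ.le hμ hf hg, ?_⟩⟩
  exact memE_and_Enorm_le (continuous_Econv hβ.le hμ hf hg)
    (Eweight_Econv_le hβ.le hμ hf hg)
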